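/- Under round-to-nearest ties-to-even, an even float z absorbs exactly the closed interval of reals of radius half its neighboring gaps: if z is finite with even significand, then round(x) = z for all reals x with z − Δ⁻(z)/2 ≤ x ≤ z + Δ⁺(z)/2, where Δ⁺(z) = z⁺ − z and Δ⁻(z) = z − z⁻ (with Δ⁺(±0) = Δ⁻(±0) = f_min and Δ⁺(f_max) = 2^{1−p+e_max}); if z has odd significand the same holds with strict inequalities. -/

import Mathlib

open scoped Classical

/-- Finite binary floating-point numbers with precision `p` and exponent range
`[emin, emax]` (subnormals included), viewed as real numbers. -/
def FF (p : ℕ) (emin emax : ℤ) : Set ℝ :=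
  {x | ∃ m e : ℤ, |m| < 2 ^ p ∧ emin ≤ e ∧ e ≤ emax ∧
        x = (m : ℝ) * (2 : ℝ) ^ (e + 1 - (p : ℤ))}

/-- Binary floating-point numbers with precision `p` and unbounded exponent. -/
def FInf (p : ℕ) : Set ℝ :=
  {x | ∃ m e : ℤ, |m| < 2 ^ p ∧ x = (m : ℝ) * (2 : ℝ) ^ e}

/-- `z` has an even least-significant significand bit (canonical representation),
format with bounded exponents. -/
def evenFF (p : ℕ) (emin emax : ℤ) (z : ℝ) : Prop :=
  ∃ m e : ℤ, |m| < 2 ^ p ∧ emin ≤ e ∧ e ≤ emax ∧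
    z = (m : ℝ) * (2 : ℝ) ^ (e + 1 - (p : ℤ)) ∧ 2 ∣ m ∧
    ((2 : ℤ) ^ (p - 1) ≤ |m| ∨ e = emin)

/-- `z` has an odd least-significant significand bit (canonical representation). -/
def oddFF (p : ℕ) (emin emax : ℤ) (z : ℝ) : Prop :=
  ∃ m e : ℤ, |m| < 2 ^ p ∧ emin ≤ e ∧ e ≤ emax ∧
    z = (m : ℝ) * (2 : ℝ) ^ (e + 1 - (p : ℤ)) ∧ ¬ 2 ∣ m ∧
    ((2 : ℤ) ^ (p - 1) ≤ |m| ∨ e = emin)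

/-- Evenness of the significand for the unbounded-exponent format. -/
def evenInf (p : ℕ) (z : ℝ) : Prop :=
  ∃ m e : ℤ, z = (m : ℝ) * (2 : ℝ) ^ e ∧ 2 ∣ m ∧
    (((2 : ℤ) ^ (p - 1) ≤ |m| ∧ |m| < 2 ^ p) ∨ m = 0)

/-- `rnd` is round-to-nearest with ties-to-even onto the set `F` of representable
numbers, `even` being the evenness predicate used to break ties. -/
def IsRNE (F : Set ℝ) (even : ℝ → Prop) (rnd : ℝ → ℝ) : Prop :=
  ∀ x : ℝ, rnd x ∈ F ∧ (∀ y ∈ F, |x - rnd x| ≤ |x - y|) ∧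
    (∀ y ∈ F, y ≠ rnd x → |x - rnd x| = |x - y| → even (rnd x))

/-- The successor of `x` in the set `F`. -/
noncomputable def succF (F : Set ℝ) (x : ℝ) : ℝ := sInf {y | y ∈ F ∧ x < y}

/-- The predecessor of `x` in the set `F`. -/
noncomputable def predF (F : Set ℝ) (x : ℝ) : ℝ := sSup {y | y ∈ F ∧ y < x}

/-- The largest finite float, `f_max = (2 - 2^(1-p)) * 2^emax`. -/
noncomputable def fmax (p : ℕ) (emax : ℤ) : ℝ :=
  (2 - (2 : ℝ) ^ (1 - (p : ℤ))) * (2 : ℝ) ^ emax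

/-- The smallest positive (subnormal) float, `f_min = 2^(emin+1-p)`. -/
noncomputable def fminF (p : ℕ) (emin : ℤ) : ℝ := (2 : ℝ) ^ (emin + 1 - (p : ℤ))

/-- The gap `Δ⁺(z)` between `z` and its successor, with the special cases
`Δ⁺(±0) = f_min` and `Δ⁺(f_max) = 2^(1-p+emax)`. -/
noncomputable def dplusF (p : ℕ) (emin emax : ℤ) (z : ℝ) : ℝ :=
  if z = fmax p emax then (2 : ℝ) ^ (1 - (p : ℤ) + emax)
  else if z = 0 then fminF p emin
  else succF (FF p emin emax) z - z

/-- The gap `Δ⁻(z)` between `z` and its predecessor, with the special cases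
`Δ⁻(±0) = f_min` and `Δ⁻(-f_max) = 2^(1-p+emax)`. -/
noncomputable def dminusF (p : ℕ) (emin emax : ℤ) (z : ℝ) : ℝ :=
  if z = -fmax p emax then (2 : ℝ) ^ (1 - (p : ℤ) + emax)
  else if z = 0 then fminF p emin
  else z - predF (FF p emin emax) z

/-!
If `rnd x = r` with `z < r`, then `x ≤ z + Δ⁺(z)/2 ≤ (z + r)/2`, so `z` is at least as close to
`x` as `r`, with equality only when `x` is the midpoint of two consecutive floats `z < r`. There
ties-to-even makes `r` even; but between two floats with even significands there always lies
another one, obtained by moving one unit in the last place from whichever of the two has the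
smaller exponent towards the other. The lower bound is the same argument after `x ↦ -x`.
-/

namespace IsRNE

variable {F : Set ℝ} {even : ℝ → Prop} {rnd : ℝ → ℝ}

theorem neg (h : IsRNE F even rnd) : IsRNE (-F) (fun t => even (-t)) (fun t => -rnd (-t)) := by
  intro t
  obtain ⟨hmem, hnear, htie⟩ := h (-t)
  have habs : ∀ a : ℝ, |t - a| = |-t - -a| := fun a => by rw [← abs_neg]; ring_nf
  refine ⟨by simpa using hmem, fun y hy => ?_, fun y hy hne heq => ?_⟩
  · rw [habs, habs y, neg_neg]
    exact hnear (-y) hy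
  · show even (- -rnd (-t))
    rw [neg_neg]
    refine htie (-y) hy (fun h => hne (neg_eq_iff_eq_neg.1 h)) ?_
    rwa [habs, habs y, neg_neg] at heq

theorem le_of_lt_add_half (h : IsRNE F even rnd) {z d x : ℝ} (hz : z ∈ F)
    (hd : ∀ r ∈ F, z < r → d ≤ r - z) (hx : x < z + d / 2) : rnd x ≤ z := by
  by_contra! hzr
  obtain ⟨hr, hnear, -⟩ := h x
  have hdr := hd _ hr hzr
  have hcloser : |x - z| < |x - rnd x| := by
    rw [abs_sub_comm x (rnd x), abs_of_pos (show 0 < rnd x - x by linarith)]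
    exact abs_sub_lt_iff.2 ⟨by linarith, by linarith⟩
  exact (hnear z hz).not_gt hcloser

theorem le_of_le_add_half (h : IsRNE F even rnd) {z d x : ℝ} (hz : z ∈ F)
    (hd : ∀ r ∈ F, z < r → d ≤ r - z)
    (hgap : ∀ r ∈ F, z < r → even r → ∃ y ∈ F, z < y ∧ y < r)
    (hx : x ≤ z + d / 2) : rnd x ≤ z := by
  rcases hx.lt_or_eq with hx | hx
  · exact h.le_of_lt_add_half hz hd hx
  by_contra! hzr
  obtain ⟨hr, hnear, htie⟩ := h x
  have hdr := hd _ hr hzr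
  have hnear_z := hnear z hz
  have hxr : |x - rnd x| = rnd x - x := by rw [abs_sub_comm]; exact abs_of_pos (by linarith)
  have hxz : |x - z| = x - z := by
    refine abs_of_pos (lt_of_not_ge fun hle => ?_)
    rw [hxr, abs_of_nonpos hle] at hnear_z
    linarith
  rw [hxr, hxz] at hnear_z
  -- now `rnd x - z = d`: `x` is the midpoint of `z` and `rnd x`, with no float strictly between
  obtain ⟨y, hy, hzy, hyr⟩ := hgap _ hr hzr (htie z hz hzr.ne (by rw [hxr, hxz]; linarith))
  linarith [hd y hy hzy]

theorem ge_of_sub_half_lt (h : IsRNE F even rnd) {z d x : ℝ} (hz : z ∈ F)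
    (hd : ∀ r ∈ F, r < z → d ≤ z - r) (hx : z - d / 2 < x) : z ≤ rnd x := by
  have := h.neg.le_of_lt_add_half (z := -z) (d := d) (x := -x) (by simpa using hz)
    (fun r hr hzr => by linarith [hd (-r) hr (by linarith)]) (by linarith)
  simp only [neg_neg] at this
  linarith

theorem ge_of_sub_half_le (h : IsRNE F even rnd) {z d x : ℝ} (hz : z ∈ F)
    (hd : ∀ r ∈ F, r < z → d ≤ z - r)
    (hgap : ∀ r ∈ F, r < z → even r → ∃ y ∈ F, r < y ∧ y < z)
    (hx : z - d / 2 ≤ x) : z ≤ rnd x := by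
  have := h.neg.le_of_le_add_half (z := -z) (d := d) (x := -x) (by simpa using hz)
    (fun r hr hzr => by linarith [hd (-r) hr (by linarith)])
    (fun r hr hzr hre => by
      obtain ⟨y, hy, hry, hyz⟩ := hgap (-r) hr (by linarith) hre
      exact ⟨-y, by simpa using hy, by linarith, by linarith⟩)
    (by linarith)
  simp only [neg_neg] at this
  linarith

end IsRNE

section FF

variable {p : ℕ} {emin emax : ℤ}

theorem neg_mem_FF {y : ℝ} (hy : y ∈ FF p emin emax) : -y ∈ FF p emin emax := by
  obtain ⟨m, e, hm, he, he', rfl⟩ := hy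
  exact ⟨-m, e, by rwa [abs_neg], he, he', by push_cast; ring⟩

theorem le_fmax_of_mem_FF {y : ℝ} (hy : y ∈ FF p emin emax) : y ≤ fmax p emax := by
  obtain ⟨m, e, hm, -, he, rfl⟩ := hy
  have hm' : (m : ℝ) ≤ 2 ^ p - 1 := by
    have : m ≤ 2 ^ p - 1 := by linarith [(abs_lt.1 hm).2]
    exact_mod_cast this
  have hfmax : fmax p emax = (2 ^ p - 1) * (2 : ℝ) ^ (emax + 1 - (p : ℤ)) := by
    simp only [fmax, zpow_sub₀ (two_ne_zero' ℝ), zpow_add₀ (two_ne_zero' ℝ), zpow_natCast,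
      zpow_one]
    field_simp
  rw [hfmax]
  calc (m : ℝ) * 2 ^ (e + 1 - (p : ℤ)) ≤ (2 ^ p - 1) * 2 ^ (e + 1 - (p : ℤ)) := by gcongr
    _ ≤ (2 ^ p - 1) * 2 ^ (emax + 1 - (p : ℤ)) := by
      gcongr
      · linarith [one_le_pow₀ (M₀ := ℝ) (a := 2) one_le_two (n := p)]
      · norm_num

theorem fminF_le_of_mem_FF {y : ℝ} (hy : y ∈ FF p emin emax) (hpos : 0 < y) :
    fminF p emin ≤ y := by
  obtain ⟨m, e, -, he, -, rfl⟩ := hy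
  have hm_pos : (0 : ℝ) < m := (pos_iff_pos_of_mul_pos hpos).2 (zpow_pos two_pos _)
  have hm : (1 : ℝ) ≤ m := by exact_mod_cast (show 0 < m by exact_mod_cast hm_pos)
  calc fminF p emin = 1 * (2 : ℝ) ^ (emin + 1 - (p : ℤ)) := (one_mul _).symm
    _ ≤ m * 2 ^ (e + 1 - (p : ℤ)) := by
      gcongr
      norm_num

theorem dplusF_le_sub {z r : ℝ} (hr : r ∈ FF p emin emax) (hzr : z < r) :
    dplusF p emin emax z ≤ r - z := by
  unfold dplusF
  split_ifs with hmax hzero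
  · exact absurd (le_fmax_of_mem_FF hr) (by linarith)
  · simpa [hzero] using fminF_le_of_mem_FF hr (by linarith)
  · have : succF (FF p emin emax) z ≤ r := csInf_le ⟨z, fun y hy => hy.2.le⟩ ⟨hr, hzr⟩
    linarith

theorem dminusF_le_sub {z r : ℝ} (hr : r ∈ FF p emin emax) (hrz : r < z) :
    dminusF p emin emax z ≤ z - r := by
  unfold dminusF
  split_ifs with hmax hzero
  · exact absurd (le_fmax_of_mem_FF (neg_mem_FF hr)) (by linarith)
  · simpa [hzero] using fminF_le_of_mem_FF (neg_mem_FF hr) (by linarith)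
  · have : r ≤ predF (FF p emin emax) z := le_csSup ⟨z, fun y hy => hy.2.le⟩ ⟨hr, hrz⟩
    linarith

theorem exists_mem_FF_between_of_even_of_le (hp : 1 ≤ p) {m n e e' : ℤ} (hm : |m| < 2 ^ p)
    (he : emin ≤ e) (hee' : e ≤ e') (he' : e' ≤ emax) (hm2 : 2 ∣ m) (hn2 : 2 ∣ n)
    (hlt : (m : ℝ) * 2 ^ (e + 1 - (p : ℤ)) < n * 2 ^ (e' + 1 - (p : ℤ))) :
    ∃ y ∈ FF p emin emax, (m : ℝ) * 2 ^ (e + 1 - (p : ℤ)) < y ∧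
      y < n * 2 ^ (e' + 1 - (p : ℤ)) := by
  have hu : (0 : ℝ) < 2 ^ (e + 1 - (p : ℤ)) := zpow_pos two_pos _
  have hn : (n : ℝ) * 2 ^ (e' + 1 - (p : ℤ)) =
      ((n * 2 ^ (e' - e).toNat : ℤ) : ℝ) * 2 ^ (e + 1 - (p : ℤ)) := by
    rw [Int.cast_mul, Int.cast_pow, Int.cast_ofNat, mul_assoc, ← zpow_natCast,
      ← zpow_add₀ two_ne_zero, Int.toNat_of_nonneg (by omega)]
    ring_nf
  rw [hn] at hlt ⊢
  have hlt' : m < n * 2 ^ (e' - e).toNat := by exact_mod_cast lt_of_mul_lt_mul_right hlt hu.le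
  -- both significands are even at the scale `2 ^ (e + 1 - p)`, so they differ by at least two
  have hsucc : m + 1 < n * 2 ^ (e' - e).toNat := by
    obtain ⟨a, rfl⟩ := hm2
    obtain ⟨b, hb⟩ := dvd_mul_of_dvd_left hn2 (2 ^ (e' - e).toNat)
    omega
  have hm1 : |m + 1| < 2 ^ p := by
    obtain ⟨a, rfl⟩ := hm2
    obtain ⟨b, hb⟩ : (2 : ℤ) ∣ 2 ^ p := dvd_pow_self 2 (by omega)
    rw [abs_lt] at hm ⊢
    omega
  refine ⟨((m + 1 : ℤ) : ℝ) * 2 ^ (e + 1 - (p : ℤ)), ⟨m + 1, e, hm1, he, hee'.trans he', rfl⟩,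
    ?_, ?_⟩
  · exact mul_lt_mul_of_pos_right (by exact_mod_cast lt_add_one m) hu
  · exact mul_lt_mul_of_pos_right (by exact_mod_cast hsucc) hu

theorem exists_mem_FF_between (hp : 1 ≤ p) {z r : ℝ} (hz : evenFF p emin emax z)
    (hr : evenFF p emin emax r) (hzr : z < r) : ∃ y ∈ FF p emin emax, z < y ∧ y < r := by
  obtain ⟨m, e, hm, he, he', rfl, hm2, -⟩ := hz
  obtain ⟨n, f, hn, hf, hf', rfl, hn2, -⟩ := hr
  rcases le_total e f with hle | hle
  · exact exists_mem_FF_between_of_even_of_le hp hm he hle hf' hm2 hn2 hzr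
  · obtain ⟨y, hy, hny, hym⟩ := exists_mem_FF_between_of_even_of_le (m := -n) (n := -m) hp
      (by rwa [abs_neg]) hf hle he' (dvd_neg.2 hn2) (dvd_neg.2 hm2)
      (by push_cast; linarith)
    push_cast at hny hym
    exact ⟨-y, neg_mem_FF hy, by linarith, by linarith⟩

end FF

theorem rne_absorption_interval_general (p : ℕ) (hp : 2 ≤ p) (emin emax : ℤ)
    (rnd : ℝ → ℝ)
    (hrnd : IsRNE (FF p emin emax) (evenFF p emin emax) rnd) :
    ∀ z ∈ FF p emin emax,
      (evenFF p emin emax z →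
        ∀ x : ℝ, z - dminusF p emin emax z / 2 ≤ x →
          x ≤ z + dplusF p emin emax z / 2 → rnd x = z) ∧
      (oddFF p emin emax z →
        ∀ x : ℝ, z - dminusF p emin emax z / 2 < x →
          x < z + dplusF p emin emax z / 2 → rnd x = z) := by
  intro z hz
  have hp1 : 1 ≤ p := by omega
  refine ⟨fun hze x hlo hhi => le_antisymm ?_ ?_, fun _ x hlo hhi => le_antisymm ?_ ?_⟩
  · exact hrnd.le_of_le_add_half hz (fun _ => dplusF_le_sub)
      (fun r _ hzr hre => exists_mem_FF_between hp1 hze hre hzr) hhi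
  · exact hrnd.ge_of_sub_half_le hz (fun _ => dminusF_le_sub)
      (fun r _ hrz hre => exists_mem_FF_between hp1 hre hze hrz) hlo
  · exact hrnd.le_of_lt_add_half hz (fun _ => dplusF_le_sub) hhi
  · exact hrnd.ge_of_sub_half_lt hz (fun _ => dminusF_le_sub) hlo

/-- A finite float `z` absorbs, under round-to-nearest ties-to-even, the closed
(resp. open, for odd significand) interval of reals of radius half its
neighboring gaps. -/
theorem rne_absorption_interval (p : ℕ) (hp : 2 ≤ p) (emin emax : ℤ)
    (hee : emin ≤ emax)
    (rnd : ℝ → ℝ)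
    (hrnd : IsRNE (FF p emin emax) (evenFF p emin emax) rnd) :
    ∀ z ∈ FF p emin emax,
      (evenFF p emin emax z →
        ∀ x : ℝ, z - dminusF p emin emax z / 2 ≤ x →
          x ≤ z + dplusF p emin emax z / 2 → rnd x = z) ∧
      (oddFF p emin emax z →
        ∀ x : ℝ, z - dminusF p emin emax z / 2 < x →
          x < z + dplusF p emin emax z / 2 → rnd x = z) :=
  rne_absorption_interval_general p hp emin emax rnd hrnd
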